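/- Let k > 1 be an integer, p ≥ 4 an even integer, and (j₀,j₁,j₂) ∈ ℕ³ with j₂ ≤ j₁ ≤ j₀ and 2j₀+j₁+j₂ = 2k−2. Then there exists a constant C > 0 such that for every smooth 2π-periodic function u : ℝ → ℝ: |∫₀^{2π} u^{p−2}·(∂_x^{j₀}u)²·(∂_x^{j₁}u)·(∂_x^{j₂}u) dx| ≤ C·‖u‖_{H^k}^{(2k−4)/(k−1)}·‖u‖_{H^1}^{p+2/(k−1)}. -/

import Mathlib

open Real MeasureTheory

/-- A smooth `2π`-periodic function on the line (i.e. a smooth function on the torus). -/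
def IsSmoothPeriodic (u : ℝ → ℝ) : Prop :=
  ContDiff ℝ (⊤:ℕ∞) u ∧ ∀ x, u (x + 2 * Real.pi) = u x

/-- The Sobolev norm `‖φ‖_{H^m}` given by `‖φ‖² = ∫φ² + ∫(∂ₓᵐφ)²`. -/
noncomputable def HnormNat (m : ℕ) (u : ℝ → ℝ) : ℝ :=
  Real.sqrt ((∫ x in (0:ℝ)..(2 * Real.pi), u x ^ 2) +
    ∫ x in (0:ℝ)..(2 * Real.pi), iteratedDeriv m u x ^ 2)

open intervalIntegral

/-- zero propagation for log-convex sequences -/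
lemma chain_zero_prop (n : ℕ) (a : ℕ → ℝ) (h0 : ∀ j, 0 ≤ a j)
    (hlc : ∀ j, 1 ≤ j → j + 1 ≤ n → a j ^ 2 ≤ a (j - 1) * a (j + 1))
    (m : ℕ) (hm1 : 1 ≤ m) (hmn : m + 1 ≤ n) (hz : a m = 0) :
    ∀ i, 1 ≤ i → i + 1 ≤ n → a i = 0 := by
  have sqz : ∀ i, 0 ≤ a i → a i ^ 2 ≤ 0 → a i = 0 := by
    intro i h1 h2; nlinarith
  have up : ∀ d, m + d + 1 ≤ n → a (m + d) = 0 := by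
    intro d
    induction d with
    | zero => intro _; simpa using hz
    | succ d ih =>
      intro hd
      have h1 : a (m + d) = 0 := ih (by omega)
      have h2 := hlc (m + d + 1) (by omega) (by omega)
      rw [show m + d + 1 - 1 = m + d from by omega, h1, zero_mul] at h2
      exact sqz _ (h0 _) (by rw [← add_assoc]; simpa using h2)
  have down : ∀ d, d ≤ m - 1 → a (m - d) = 0 := by
    intro d
    induction d with
    | zero => intro _; simpa using hz
    | succ d ih =>
      intro hd
      have h1 : a (m - d) = 0 := ih (by omega)
      have h2 := hlc (m - d - 1) (by omega) (by omega)
      rw [show m - d - 1 + 1 = m - d from by omega, h1, mul_zero] at h2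
      rw [show m - (d+1) = m - d - 1 from by omega]
      exact sqz _ (h0 _) h2
  intro i hi1 hin
  rcases le_or_gt m i with h | h
  · have := up (i - m) (by omega); rwa [show m + (i - m) = i from by omega] at this
  · have := down (m - i) (by omega); rwa [show m - (m - i) = i from by omega] at this

/-- Log-convex sequences interpolate between endpoints. -/
lemma chain_pow (n : ℕ) (a : ℕ → ℝ) (h0 : ∀ j, 0 ≤ a j)
    (hlc : ∀ j, 1 ≤ j → j + 1 ≤ n → a j ^ 2 ≤ a (j - 1) * a (j + 1)) :
    ∀ j ≤ n, a j ^ n ≤ a 0 ^ (n - j) * a n ^ j := by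
  intro j hj
  rcases Nat.eq_zero_or_pos j with rfl | hj0
  · simp
  rcases eq_or_lt_of_le hj with rfl | hjn
  · simp
  have hn2 : 2 ≤ n := by omega
  by_cases hz : ∃ m, 1 ≤ m ∧ m + 1 ≤ n ∧ a m = 0
  · obtain ⟨m, hm1, hmn, hma⟩ := hz
    have hja : a j = 0 := chain_zero_prop n a h0 hlc m hm1 hmn hma j hj0 (by omega)
    rw [hja, zero_pow (by omega)]
    exact mul_nonneg (pow_nonneg (h0 0) _) (pow_nonneg (h0 n) _)
  · push_neg at hz
    have hpos : ∀ i, 1 ≤ i → i + 1 ≤ n → 0 < a i := fun i h1 h2 =>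
      lt_of_le_of_ne (h0 i) (Ne.symm (hz i h1 h2))
    have ha0 : 0 < a 0 := by
      rcases eq_or_lt_of_le (h0 0) with h | h
      · exfalso
        have h2 := hlc 1 le_rfl hn2
        simp only [Nat.sub_self] at h2
        rw [← h] at h2
        have : a 1 = 0 := by nlinarith [h0 1]
        exact hz 1 le_rfl hn2 this
      · exact h
    have han : 0 < a n := by
      rcases eq_or_lt_of_le (h0 n) with h | h
      · exfalso
        have h2 := hlc (n-1) (by omega) (by omega)
        rw [show n - 1 + 1 = n from by omega, ← h, mul_zero] at h2
        have : a (n-1) = 0 := by nlinarith [h0 (n-1)]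
        exact hz (n-1) (by omega) (by omega) this
      · exact h
    have hap : ∀ i ≤ n, 0 < a i := by
      intro i hi
      rcases Nat.eq_zero_or_pos i with rfl | h1
      · exact ha0
      rcases eq_or_lt_of_le hi with rfl | h2
      · exact han
      exact hpos i h1 (by omega)
    set b : ℕ → ℝ := fun i => Real.log (a i) with hb
    set c : ℕ → ℝ := fun i => b (i+1) - b i with hc
    have hconv : ∀ i, i + 2 ≤ n → c i ≤ c (i + 1) := by
      intro i hi
      have h2 := hlc (i+1) (by omega) (by omega)
      simp only [Nat.add_sub_cancel] at h2
      have l2 : 2 * b (i+1) ≤ b i + b (i+2) := by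
        have lp := Real.log_le_log (pow_pos (hap (i+1) (by omega)) 2) h2
        rw [Real.log_pow, Real.log_mul (ne_of_gt (hap i (by omega)))
          (ne_of_gt (hap (i+2) (by omega)))] at lp
        simp only [hb]
        exact_mod_cast lp
      simp only [hc]
      have : i + 1 + 1 = i + 2 := rfl
      rw [this]; linarith
    have cmono : ∀ i i', i ≤ i' → i' + 1 ≤ n → c i ≤ c i' := by
      intro i i' hii
      induction i' with
      | zero => intro _; interval_cases i; rfl
      | succ i' ih =>
        intro h
        rcases eq_or_lt_of_le hii with rfl | hlt
        · rfl
        · exact le_trans (ih (by omega) (by omega)) (hconv i' (by omega))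
    have tel1 : b j - b 0 = ∑ i ∈ Finset.range j, c i := by
      rw [Finset.sum_range_sub (f := b)]
    have tel2 : b n - b j = ∑ i ∈ Finset.Ico j n, c i := by
      rw [Finset.sum_Ico_eq_sub _ (le_of_lt hjn), Finset.sum_range_sub (f := b),
        Finset.sum_range_sub (f := b)]
      ring
    have s1 : ∑ i ∈ Finset.range j, c i ≤ j * c (j-1) := by
      have := Finset.sum_le_card_nsmul (Finset.range j) c (c (j-1)) (by
        intro i hi
        exact cmono i (j-1) (by simp at hi; omega) (by omega))
      simpa [nsmul_eq_mul] using this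
    have s2 : (n - j : ℕ) * c (j-1) ≤ ∑ i ∈ Finset.Ico j n, c i := by
      have := Finset.card_nsmul_le_sum (Finset.Ico j n) c (c (j-1)) (by
        intro i hi
        simp only [Finset.mem_Ico] at hi
        exact cmono (j-1) i (by omega) (by omega))
      simpa [nsmul_eq_mul, Nat.card_Ico] using this
    have main : (n:ℝ) * b j ≤ (n - j : ℕ) * b 0 + j * b n := by
      have e1 : b j - b 0 ≤ j * c (j-1) := by rw [tel1]; exact s1
      have e2 : ((n - j : ℕ):ℝ) * c (j-1) ≤ b n - b j := by rw [tel2]; exact s2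
      have key : ((n - j : ℕ):ℝ) * (b j - b 0) ≤ (j:ℝ) * (b n - b j) := by
        calc ((n - j : ℕ):ℝ) * (b j - b 0) ≤ ((n - j : ℕ):ℝ) * ((j:ℝ) * c (j-1)) := by
              apply mul_le_mul_of_nonneg_left e1 (by positivity)
          _ = (j:ℝ) * (((n - j:ℕ):ℝ) * c (j-1)) := by ring
          _ ≤ (j:ℝ) * (b n - b j) := mul_le_mul_of_nonneg_left e2 (by positivity)
      have hcast : ((n - j : ℕ):ℝ) = (n:ℝ) - (j:ℝ) := by
        rw [Nat.cast_sub (le_of_lt hjn)]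
      rw [hcast] at key ⊢
      nlinarith [key]
    have expb : ∀ i, i ≤ n → a i = Real.exp (b i) := fun i hi => (Real.exp_log (hap i hi)).symm
    rw [expb j hj, expb 0 (by omega), expb n le_rfl, ← Real.exp_nat_mul, ← Real.exp_nat_mul,
      ← Real.exp_nat_mul, ← Real.exp_add]
    exact Real.exp_le_exp.mpr (by linarith [main])

/-- Cauchy–Schwarz for interval integrals of continuous functions. -/
lemma integral_mul_sq_le' {T : ℝ} (hT : 0 ≤ T) (f g : ℝ → ℝ)
    (hf : Continuous f) (hg : Continuous g) :
    (∫ x in (0:ℝ)..T, f x * g x) ^ 2 ≤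
      (∫ x in (0:ℝ)..T, f x ^ 2) * ∫ x in (0:ℝ)..T, g x ^ 2 := by
  set A := ∫ x in (0:ℝ)..T, g x ^ 2 with hA
  set B := ∫ x in (0:ℝ)..T, f x * g x with hB
  set C := ∫ x in (0:ℝ)..T, f x ^ 2 with hC
  have key : ∀ t : ℝ, 0 ≤ A * (t * t) + (2 * B) * t + C := by
    intro t
    have h1 : (0:ℝ) ≤ ∫ x in (0:ℝ)..T, (t * g x + f x) ^ 2 :=
      integral_nonneg hT (fun u _ => sq_nonneg _)
    have h2 : (∫ x in (0:ℝ)..T, (t * g x + f x) ^ 2)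
        = (t*t) * A + (2*t) * B + C := by
      rw [hA, hB, hC, ← intervalIntegral.integral_const_mul, ← intervalIntegral.integral_const_mul,
        ← intervalIntegral.integral_add (by apply Continuous.intervalIntegrable; continuity)
          (by apply Continuous.intervalIntegrable; continuity),
        ← intervalIntegral.integral_add (by apply Continuous.intervalIntegrable; continuity)
          (by apply Continuous.intervalIntegrable; continuity)]
      congr 1; funext x; ring
    nlinarith [h1, h2]
  have hd := discrim_le_zero key
  rw [discrim] at hd
  nlinarith [hd]

set_option maxHeartbeats 1000000 in
/-- Theorem: for `(j₀,j₁,j₂) ∈ A^k`, the density `I_{j₀,j₁,j₂}` satisfies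
`|∫ u^{p−2}(∂ₓ^{j₀}u)²(∂ₓ^{j₁}u)(∂ₓ^{j₂}u)| ≤ C‖u‖_{H^k}^{(2k−4)/(k−1)} ‖u‖_{H^1}^{p+2/(k−1)}`
for all smooth `2π`-periodic `u`. -/
theorem density_interpolation_bound (k p : ℕ) (hk : 1 < k) (hp : 4 ≤ p) (hpeven : Even p)
    (j₀ j₁ j₂ : ℕ) (h21 : j₂ ≤ j₁) (h10 : j₁ ≤ j₀)
    (hsum : 2 * j₀ + j₁ + j₂ = 2 * k - 2) :
    ∃ C > (0:ℝ), ∀ u : ℝ → ℝ, IsSmoothPeriodic u →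
      |∫ x in (0:ℝ)..(2 * Real.pi), u x ^ (p - 2) * iteratedDeriv j₀ u x ^ 2 *
          iteratedDeriv j₁ u x * iteratedDeriv j₂ u x| ≤
        C * HnormNat k u ^ ((2 * (k:ℝ) - 4) / ((k:ℝ) - 1)) *
          HnormNat 1 u ^ ((p:ℝ) + 2 / ((k:ℝ) - 1)) := by
  obtain ⟨m, rfl⟩ : ∃ m, k = m + 2 := ⟨k - 2, by omega⟩
  obtain ⟨p', rfl⟩ : ∃ p', p = p' + 4 := ⟨p - 4, by omega⟩
  obtain ⟨a, rfl⟩ : ∃ a, j₀ = a + 1 := ⟨j₀ - 1, by omega⟩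
  obtain ⟨s₀, hs₀⟩ : ∃ s₀, a + s₀ = m + 1 := ⟨m + 1 - a, by omega⟩
  obtain ⟨s₁, hs₁⟩ : ∃ s₁, j₁ + s₁ = m + 1 := ⟨m + 1 - j₁, by omega⟩
  obtain ⟨s₂, hs₂⟩ : ∃ s₂, j₂ + s₂ = m + 1 := ⟨m + 1 - j₂, by omega⟩
  set T : ℝ := 2 * Real.pi with hTdef
  have hT : 0 < T := by positivity
  set P : ℝ := 1 + 1/T with hPdef
  have hPpos : 0 < P := by positivity
  set C₁ : ℝ := P ^ ((p' + 2) * (m + 1)) * (P ^ (m+1) * 2 ^ (m+3)) ^ 2 with hC1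
  have hC1pos : 0 < C₁ := by positivity
  set n2 : ℕ := 2 * (m + 1) with hn2
  refine ⟨C₁ ^ (1/(n2:ℝ)), Real.rpow_pos_of_pos hC1pos _, ?_⟩
  intro u hu
  obtain ⟨husm, huper⟩ := hu
  set v : ℕ → ℝ → ℝ := fun j => iteratedDeriv j u with hv
  have hsmooth : ∀ j, ContDiff ℝ (⊤:ℕ∞) (v j) := by
    intro j
    simp only [hv, iteratedDeriv_eq_iterate]
    exact husm.iterate_deriv j
  have hcont : ∀ j, Continuous (v j) := fun j => (hsmooth j).continuous
  have hD : ∀ j x, HasDerivAt (v j) (v (j+1) x) x := by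
    intro j x
    have h1 : DifferentiableAt ℝ (v j) x :=
      ((hsmooth j).differentiable (by simp)).differentiableAt
    have h2 : v (j+1) x = deriv (v j) x := by
      simp only [hv, iteratedDeriv_succ]
    rw [h2]
    exact h1.hasDerivAt
  have hper : ∀ j x, v j (x + T) = v j x := by
    intro j x
    have h : (fun z => u (z + T)) = u := funext huper
    have h2 := iteratedDeriv_comp_add_const j u T
    rw [h] at h2
    exact (congrFun h2 x).symm
  have hInt : ∀ f : ℝ → ℝ, Continuous f → IntervalIntegrable f volume 0 T :=
    fun f hf => hf.intervalIntegrable _ _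
  set q : ℕ → ℝ := fun j => ∫ x in (0:ℝ)..T, v j x ^ 2 with hq
  have hq0 : ∀ j, 0 ≤ q j := fun j => integral_nonneg hT.le (fun x _ => sq_nonneg _)
  -- integration by parts + Cauchy–Schwarz
  have hibp : ∀ j, q (j+1) ^ 2 ≤ q j * q (j+2) := by
    intro j
    have h1 : ∫ x in (0:ℝ)..T, v j x * v (j+2) x
        = v j T * v (j+1) T - v j 0 * v (j+1) 0 - ∫ x in (0:ℝ)..T, v (j+1) x * v (j+1) x :=
      integral_mul_deriv_eq_deriv_mul (fun x _ => hD j x) (fun x _ => hD (j+1) x)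
        (hInt _ (hcont (j+1))) (hInt _ (hcont (j+2)))
    have hb1 : v j T = v j 0 := by
      have := hper j 0; rwa [zero_add] at this
    have hb2 : v (j+1) T = v (j+1) 0 := by
      have := hper (j+1) 0; rwa [zero_add] at this
    have h2 : q (j+1) = - ∫ x in (0:ℝ)..T, v j x * v (j+2) x := by
      rw [h1, hb1, hb2]
      have h3 : q (j+1) = ∫ x in (0:ℝ)..T, v (j+1) x * v (j+1) x := by
        simp only [hq, sq]
      rw [h3]; ring
    calc q (j+1) ^ 2 = (∫ x in (0:ℝ)..T, v j x * v (j+2) x) ^ 2 := by rw [h2]; ring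
      _ ≤ (∫ x in (0:ℝ)..T, v j x ^ 2) * ∫ x in (0:ℝ)..T, v (j+2) x ^ 2 :=
          integral_mul_sq_le' hT.le _ _ (hcont j) (hcont (j+2))
      _ = q j * q (j+2) := rfl
  -- sup bound
  have hsup : ∀ j, ∀ x ∈ Set.Icc (0:ℝ) T, v j x ^ 2 ≤ P * (q j + q (j+1)) := by
    intro j x hx
    have hcont2 : Continuous fun t => 2 * v j t * v (j+1) t :=
      (continuous_const.mul (hcont j)).mul (hcont (j+1))
    have habs : ∫ t in (0:ℝ)..T, |2 * v j t * v (j+1) t| ≤ q j + q (j+1) := by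
      have hpt : ∀ t ∈ Set.Icc (0:ℝ) T, |2 * v j t * v (j+1) t| ≤ v j t ^ 2 + v (j+1) t ^ 2 := by
        intro t _
        rw [abs_le]
        constructor <;> nlinarith [sq_nonneg (v j t - v (j+1) t), sq_nonneg (v j t + v (j+1) t)]
      calc ∫ t in (0:ℝ)..T, |2 * v j t * v (j+1) t|
          ≤ ∫ t in (0:ℝ)..T, (v j t ^ 2 + v (j+1) t ^ 2) :=
            integral_mono_on hT.le (hInt _ hcont2.abs)
              (hInt _ (((hcont j).pow 2).add ((hcont (j+1)).pow 2))) hpt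
        _ = q j + q (j+1) :=
            intervalIntegral.integral_add (hInt _ ((hcont j).pow 2)) (hInt _ ((hcont (j+1)).pow 2))
    have key : ∀ y ∈ Set.Icc (0:ℝ) T, v j x ^ 2 - (q j + q (j+1)) ≤ v j y ^ 2 := by
      intro y hy
      have ftc : ∫ t in y..x, 2 * v j t * v (j+1) t = v j x ^ 2 - v j y ^ 2 :=
        integral_eq_sub_of_hasDerivAt (fun t _ => by simpa using (hD j t).pow 2)
          (hcont2.intervalIntegrable _ _)
      have hbound : ∫ t in y..x, 2 * v j t * v (j+1) t ≤ q j + q (j+1) := by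
        have habs2 : ∀ (c d : ℝ), 0 ≤ c → c ≤ d → d ≤ T →
            ∫ t in c..d, |2 * v j t * v (j+1) t| ≤ q j + q (j+1) := by
          intro c d hc hcd hdT
          refine le_trans (integral_mono_interval hc hcd hdT
            (Filter.Eventually.of_forall fun t => abs_nonneg _)
            (hInt _ hcont2.abs)) habs
        rcases le_total y x with hyx | hxy
        · calc ∫ t in y..x, 2 * v j t * v (j+1) t
              ≤ ∫ t in y..x, |2 * v j t * v (j+1) t| :=
                integral_mono_on hyx (hcont2.intervalIntegrable _ _)
                  (hcont2.abs.intervalIntegrable _ _) (fun t _ => le_abs_self _)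
            _ ≤ q j + q (j+1) := habs2 y x hy.1 hyx hx.2
        · calc ∫ t in y..x, 2 * v j t * v (j+1) t
              = - ∫ t in x..y, 2 * v j t * v (j+1) t := (intervalIntegral.integral_symm _ _)
            _ ≤ ∫ t in x..y, |2 * v j t * v (j+1) t| := by
                have : - ∫ t in x..y, |2 * v j t * v (j+1) t|
                    ≤ ∫ t in x..y, 2 * v j t * v (j+1) t := by
                  rw [← intervalIntegral.integral_neg]
                  exact integral_mono_on hxy
                    (hcont2.abs.neg.intervalIntegrable _ _)
                    (hcont2.intervalIntegrable _ _) (fun t _ => neg_abs_le _)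
                linarith
            _ ≤ q j + q (j+1) := habs2 x y hx.1 hxy hy.2
      linarith [ftc ▸ hbound]
    have hmono := integral_mono_on hT.le intervalIntegrable_const (hInt _ ((hcont j).pow 2)) key
    rw [intervalIntegral.integral_const] at hmono
    have hTm : T * (v j x ^ 2 - (q j + q (j+1))) ≤ q j := by
      have hqeq : (∫ y in (0:ℝ)..T, v j y ^ 2) = q j := rfl
      simp only [Pi.pow_apply] at hmono
      rw [hqeq] at hmono
      simpa [smul_eq_mul] using hmono
    have hqj : q j ≤ q j + q (j+1) := le_add_of_nonneg_right (hq0 (j+1))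
    have h1 : v j x ^ 2 - (q j + q (j+1)) ≤ (q j + q (j+1)) / T := by
      rw [le_div_iff₀ hT]
      nlinarith [hTm, hqj]
    have : v j x ^ 2 ≤ (q j + q (j+1)) + (q j + q (j+1)) / T := by linarith
    calc v j x ^ 2 ≤ (q j + q (j+1)) + (q j + q (j+1)) / T := this
      _ = P * (q j + q (j+1)) := by rw [hPdef]; ring
  -- norms
  set X : ℝ := HnormNat (m+2) u with hX
  set Y : ℝ := HnormNat 1 u with hY
  have hXnn : 0 ≤ X := Real.sqrt_nonneg _
  have hYnn : 0 ≤ Y := Real.sqrt_nonneg _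
  have hintnn : ∀ f : ℝ → ℝ, 0 ≤ (∫ x in (0:ℝ)..(2*Real.pi), f x ^ 2) := fun f =>
    intervalIntegral.integral_nonneg (by positivity) (fun x _ => sq_nonneg _)
  have hX2 : X ^ 2 = q 0 + q (m+2) := by
    rw [hX, HnormNat, Real.sq_sqrt (add_nonneg (hintnn u) (hintnn _))]
    simp only [hq, hv, iteratedDeriv_zero, hTdef]
  have hY2 : Y ^ 2 = q 0 + q 1 := by
    rw [hY, HnormNat, Real.sq_sqrt (add_nonneg (hintnn u) (hintnn _))]
    simp only [hq, hv, iteratedDeriv_zero, hTdef]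
  have hq0Y : q 0 ≤ Y ^ 2 := by rw [hY2]; linarith [hq0 1]
  have hq1Y : q 1 ≤ Y ^ 2 := by rw [hY2]; linarith [hq0 0]
  have hqkX : q (m+2) ≤ X ^ 2 := by rw [hX2]; linarith [hq0 0]
  -- interpolation between H^1 and H^k
  have interp : ∀ s t, s + t = m + 1 → q (t+1) ^ (m+1) ≤ Y ^ (2*s) * X ^ (2*t) := by
    intro s t hst
    have hch := chain_pow (m+1) (fun i => q (i+1)) (fun i => hq0 _)
      (by
        intro i hi1 hin
        show q (i+1) ^ 2 ≤ q (i - 1 + 1) * q (i + 1 + 1)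
        rw [show i - 1 + 1 = i from by omega]
        exact hibp i) t (by omega)
    calc q (t+1) ^ (m+1) ≤ q 1 ^ (m+1-t) * q (m+2) ^ t := by
          simpa using hch
      _ ≤ (Y^2) ^ (m+1-t) * (X^2) ^ t := by
          exact mul_le_mul (pow_le_pow_left₀ (hq0 1) hq1Y _)
            (pow_le_pow_left₀ (hq0 _) hqkX _) (pow_nonneg (hq0 _) _)
            (pow_nonneg (by positivity) _)
      _ = Y ^ (2*s) * X ^ (2*t) := by
          rw [← pow_mul, ← pow_mul, show 2*(m+1-t) = 2*s from by omega]
  have hq1b : q 1 ≤ q 0 + q (m+2) := by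
    have hch := chain_pow (m+2) q hq0
      (by
        intro i hi1 hin
        have h := hibp (i-1)
        rw [show i - 1 + 1 = i from by omega, show i - 1 + 2 = i + 1 from by omega] at h
        exact h) 1 (by omega)
    have hqknn : (0:ℝ) ≤ q 0 + q (m+2) := add_nonneg (hq0 0) (hq0 _)
    have h2 : q 1 ^ (m+2) ≤ (q 0 + q (m+2)) ^ (m+2) := by
      calc q 1 ^ (m+2) ≤ q 0 ^ (m+2-1) * q (m+2) ^ 1 := hch
        _ ≤ (q 0 + q (m+2)) ^ (m+2-1) * (q 0 + q (m+2)) ^ 1 :=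
            mul_le_mul (pow_le_pow_left₀ (hq0 0) (le_add_of_nonneg_right (hq0 _)) _)
              (pow_le_pow_left₀ (hq0 _) (le_add_of_nonneg_left (hq0 0)) _)
              (pow_nonneg (hq0 _) _) (pow_nonneg hqknn _)
        _ = (q 0 + q (m+2)) ^ (m+2) := by rw [← pow_add]; norm_num
    exact le_of_pow_le_pow_left₀ (by omega) hqknn h2
  have hY2X : Y^2 ≤ 2 * X^2 := by rw [hY2, hX2]; linarith [hq1b, hq0 0, hq0 (m+2)]
  -- bound on (q j + q (j+1)) ^ (m+1)
  have hKb : ∀ j s, j + s = m + 1 → (q j + q (j+1)) ^ (m+1) ≤ 2^(m+3) * (X^(2*j) * Y^(2*s)) := by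
    intro j s hjs
    have hbnn : (0:ℝ) ≤ X^(2*j) * Y^(2*s) := by positivity
    have hsplit : (q j + q (j+1)) ^ (m+1) ≤ 2^(m+1) * (q j ^(m+1) + q (j+1) ^ (m+1)) := by
      refine le_trans (add_pow_le (hq0 j) (hq0 (j+1)) (m+1)) ?_
      exact mul_le_mul_of_nonneg_right (pow_le_pow_right₀ one_le_two (by omega))
        (add_nonneg (pow_nonneg (hq0 _) _) (pow_nonneg (hq0 _) _))
    have e2 : q (j+1) ^ (m+1) ≤ X^(2*j) * Y^(2*s) := by
      have h := interp s j (by omega)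
      exact h.trans (le_of_eq (mul_comm _ _))
    have e1 : q j ^ (m+1) ≤ 2 * (X^(2*j) * Y^(2*s)) := by
      rcases Nat.eq_zero_or_pos j with rfl | hj1
      · have hs : s = m + 1 := by omega
        calc q 0 ^ (m+1) ≤ (Y^2) ^ (m+1) := pow_le_pow_left₀ (hq0 0) hq0Y _
          _ = X^(2*0) * Y^(2*s) := by rw [← pow_mul, hs]; ring
          _ ≤ 2 * (X^(2*0) * Y^(2*s)) := by nlinarith [hbnn]
      · calc q j ^ (m+1) ≤ Y^(2*s+2) * X^(2*(j-1)) := by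
              rw [show 2*s+2 = 2*(s+1) from by ring]
              have h := interp (s+1) (j-1) (by omega)
              rwa [show j-1+1 = j from by omega] at h
          _ = (Y^(2*s) * X^(2*(j-1))) * Y^2 := by ring
          _ ≤ (Y^(2*s) * X^(2*(j-1))) * (2*X^2) := by
              exact mul_le_mul_of_nonneg_left hY2X (by positivity)
          _ = 2*(X^(2*(j-1)+2) * Y^(2*s)) := by ring
          _ = 2*(X^(2*j)*Y^(2*s)) := by rw [show 2*(j-1)+2 = 2*j from by omega]
    calc (q j + q (j+1)) ^ (m+1) ≤ 2^(m+1) * (q j ^(m+1) + q (j+1) ^ (m+1)) := hsplit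
      _ ≤ 2^(m+1) * (2 * (X^(2*j) * Y^(2*s)) + X^(2*j) * Y^(2*s)) := by
          have h2p : (0:ℝ) ≤ 2^(m+1) := by positivity
          exact mul_le_mul_of_nonneg_left (add_le_add e1 e2) h2p
      _ = 3 * 2^(m+1) * (X^(2*j) * Y^(2*s)) := by ring
      _ ≤ 2^(m+3) * (X^(2*j) * Y^(2*s)) := by
          have h3 : (3:ℝ) * 2^(m+1) ≤ 2^(m+3) := by
            have : (2:ℝ)^(m+3) = 2^(m+1) * 4 := by rw [pow_succ, pow_succ]; ring
            nlinarith [pow_pos (by norm_num : (0:ℝ) < 2) (m+1)]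
          exact mul_le_mul_of_nonneg_right h3 hbnn
  -- pointwise bounds and the main integral estimate
  set B0 : ℝ := P * (q 0 + q 1) with hB0
  set B1 : ℝ := P * (q j₁ + q (j₁+1)) with hB1
  set B2 : ℝ := P * (q j₂ + q (j₂+1)) with hB2
  have hB0nn : 0 ≤ B0 := mul_nonneg hPpos.le (add_nonneg (hq0 _) (hq0 _))
  have hB1nn : 0 ≤ B1 := mul_nonneg hPpos.le (add_nonneg (hq0 _) (hq0 _))
  have hB2nn : 0 ≤ B2 := mul_nonneg hPpos.le (add_nonneg (hq0 _) (hq0 _))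
  set W : ℝ := Real.sqrt B0 ^ (p'+2) * Real.sqrt B1 * Real.sqrt B2 with hW
  have hWnn : 0 ≤ W := by positivity
  have habsb : ∀ j x, x ∈ Set.Icc (0:ℝ) T → |v j x| ≤ Real.sqrt (P * (q j + q (j+1))) := by
    intro j x hx
    rw [← Real.sqrt_sq_eq_abs]
    exact Real.sqrt_le_sqrt (hsup j x hx)
  have hIle : |∫ x in (0:ℝ)..T, u x ^ (p'+4-2) * v (a+1) x ^ 2 * v j₁ x * v j₂ x| ≤ W * q (a+1) := by
    have hfc : Continuous fun x => u x ^ (p'+4-2) * v (a+1) x ^2 * v j₁ x * v j₂ x :=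
      (((husm.continuous.pow _).mul ((hcont _).pow 2)).mul (hcont _)).mul (hcont _)
    have hgc : Continuous fun x => W * v (a+1) x ^2 := continuous_const.mul ((hcont _).pow 2)
    calc |∫ x in (0:ℝ)..T, u x ^ (p'+4-2) * v (a+1) x ^ 2 * v j₁ x * v j₂ x|
        ≤ ∫ x in (0:ℝ)..T, |u x ^ (p'+4-2) * v (a+1) x ^ 2 * v j₁ x * v j₂ x| :=
          intervalIntegral.abs_integral_le_integral_abs hT.le
      _ ≤ ∫ x in (0:ℝ)..T, W * v (a+1) x ^ 2 := by
          refine integral_mono_on hT.le (hfc.abs.intervalIntegrable _ _)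
            (hgc.intervalIntegrable _ _) ?_
          intro x hx
          have h0 : |u x| ≤ Real.sqrt B0 := by
            have h := habsb 0 x hx
            rw [hB0]
            simpa [hv, iteratedDeriv_zero] using h
          have h1 : |v j₁ x| ≤ Real.sqrt B1 := by rw [hB1]; exact habsb j₁ x hx
          have h2 : |v j₂ x| ≤ Real.sqrt B2 := by rw [hB2]; exact habsb j₂ x hx
          have e : |u x ^ (p'+4-2) * v (a+1) x ^ 2 * v j₁ x * v j₂ x|
              = |u x| ^ (p'+2) * v (a+1) x ^ 2 * |v j₁ x| * |v j₂ x| := by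
            rw [show p'+4-2 = p'+2 from rfl]
            rw [abs_mul, abs_mul, abs_mul, abs_pow, abs_pow, sq_abs]
          rw [e, hW]
          calc |u x| ^ (p'+2) * v (a+1) x ^ 2 * |v j₁ x| * |v j₂ x|
              ≤ Real.sqrt B0 ^ (p'+2) * v (a+1) x ^ 2 * Real.sqrt B1 * Real.sqrt B2 := by
                have h0' := pow_le_pow_left₀ (abs_nonneg (u x)) h0 (p'+2)
                gcongr
            _ = (Real.sqrt B0 ^ (p'+2) * Real.sqrt B1 * Real.sqrt B2) * v (a+1) x ^2 := by ring
      _ = W * q (a+1) := intervalIntegral.integral_const_mul _ _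
  set M : ℝ := W * q (a+1) with hM
  have hMnn : 0 ≤ M := mul_nonneg hWnn (hq0 _)
  set G : ℕ := 2*(p'+4)*(m+1)+4 with hG
  have hMpow : M ^ n2 ≤ C₁ * X ^ (4*m) * Y ^ G := by
    have hs0 : Real.sqrt B0 ^ 2 = B0 := Real.sq_sqrt hB0nn
    have hs1 : Real.sqrt B1 ^ 2 = B1 := Real.sq_sqrt hB1nn
    have hs2 : Real.sqrt B2 ^ 2 = B2 := Real.sq_sqrt hB2nn
    have hMexp : M ^ n2 = B0 ^ ((p'+2)*(m+1)) * B1 ^ (m+1) * B2 ^ (m+1) * (q (a+1) ^ (m+1))^2 := by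
      rw [← hs0, ← hs1, ← hs2, hM, hW, hn2]
      ring
    rw [hMexp]
    have hb0e : B0 ^ ((p'+2)*(m+1)) = P ^ ((p'+2)*(m+1)) * Y ^ (2*((p'+2)*(m+1))) := by
      rw [hB0, ← hY2, mul_pow, ← pow_mul]
    have hb1e : B1 ^ (m+1) ≤ P^(m+1) * (2^(m+3) * (X^(2*j₁)*Y^(2*s₁))) := by
      rw [hB1, mul_pow]
      exact mul_le_mul_of_nonneg_left (hKb j₁ s₁ hs₁) (by positivity)
    have hb2e : B2 ^ (m+1) ≤ P^(m+1) * (2^(m+3) * (X^(2*j₂)*Y^(2*s₂))) := by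
      rw [hB2, mul_pow]
      exact mul_le_mul_of_nonneg_left (hKb j₂ s₂ hs₂) (by positivity)
    have hq0e : (q (a+1)^(m+1))^2 ≤ (Y^(2*s₀) * X^(2*a))^2 :=
      pow_le_pow_left₀ (pow_nonneg (hq0 _) _) (interp s₀ a (by omega)) 2
    have hfinal : P ^ ((p'+2)*(m+1)) * Y ^ (2*((p'+2)*(m+1)))
        * (P^(m+1) * (2^(m+3) * (X^(2*j₁)*Y^(2*s₁))))
        * (P^(m+1) * (2^(m+3) * (X^(2*j₂)*Y^(2*s₂))))
        * (Y^(2*s₀) * X^(2*a))^2 = C₁ * X ^ (4*m) * Y ^ G := by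
      rw [hC1, hG]
      have hx4 : 4*m = 2*j₁ + (2*j₂ + 2*(2*a)) := by omega
      have hy4 : 2*s₁ + (2*s₂ + 2*(2*s₀)) = 4*m+8 := by omega
      have hyg : 2*(p'+4)*(m+1)+4 = 2*((p'+2)*(m+1)) + (2*s₁ + (2*s₂ + 2*(2*s₀))) := by
        rw [hy4]; ring
      rw [hx4, hyg]
      ring
    calc B0 ^ ((p'+2)*(m+1)) * B1 ^ (m+1) * B2 ^ (m+1) * (q (a+1) ^ (m+1))^2
        ≤ P ^ ((p'+2)*(m+1)) * Y ^ (2*((p'+2)*(m+1)))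
            * (P^(m+1) * (2^(m+3) * (X^(2*j₁)*Y^(2*s₁))))
            * (P^(m+1) * (2^(m+3) * (X^(2*j₂)*Y^(2*s₂))))
            * (Y^(2*s₀) * X^(2*a))^2 := by
          rw [hb0e]
          have m1 : (0:ℝ) ≤ P ^ ((p'+2)*(m+1)) * Y ^ (2*((p'+2)*(m+1))) := by positivity
          refine mul_le_mul (mul_le_mul (mul_le_mul_of_nonneg_left hb1e m1) hb2e
            (pow_nonneg hB2nn _) (by positivity)) hq0e
            (pow_nonneg (pow_nonneg (hq0 _) _) _) (by positivity)
      _ = C₁ * X ^ (4*m) * Y ^ G := hfinal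
  -- conclude via rpow arithmetic
  have hn2pos : (0:ℝ) < (n2:ℝ) := by rw [hn2]; push_cast; positivity
  have step1 : M ≤ (C₁ * X ^ (4*m) * Y ^ G) ^ (1/(n2:ℝ)) := by
    have h1 : M = (M ^ n2) ^ (1/(n2:ℝ)) := by
      rw [← Real.rpow_natCast M n2, ← Real.rpow_mul hMnn, mul_one_div,
        div_self (ne_of_gt hn2pos), Real.rpow_one]
    rw [h1]
    exact Real.rpow_le_rpow (by positivity) hMpow (by positivity)
  have step2 : (C₁ * X ^ (4*m) * Y ^ G) ^ (1/(n2:ℝ))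
      = C₁ ^ (1/(n2:ℝ)) * X ^ ((2 * ((m+2:ℕ):ℝ) - 4) / (((m+2:ℕ):ℝ) - 1))
        * Y ^ (((p'+4:ℕ):ℝ) + 2 / (((m+2:ℕ):ℝ) - 1)) := by
    rw [Real.mul_rpow (by positivity) (by positivity),
      Real.mul_rpow (by positivity) (by positivity)]
    have hm1 : ((m:ℝ)+1) ≠ 0 := by positivity
    congr 1
    · congr 1
      rw [← Real.rpow_natCast X (4*m), ← Real.rpow_mul hXnn]
      congr 1
      rw [hn2]
      push_cast
      rw [show (2*((m:ℝ)+2)-4) = 2*(m:ℝ) from by ring,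
        show ((m:ℝ)+2-1) = (m:ℝ)+1 from by ring]
      field_simp
      ring
    · rw [← Real.rpow_natCast Y G, ← Real.rpow_mul hYnn]
      congr 1
      rw [hn2, hG]
      push_cast
      rw [show ((m:ℝ)+2-1) = (m:ℝ)+1 from by ring]
      field_simp
      ring
  have final := le_trans hIle (le_trans step1 (le_of_eq step2))
  simpa only [hv] using final
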